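/- Let τ ∈ {0,1}^ℕ and let (y^L)_{L∈ℕ} be a family of alternating sequences in {A,B,C,D}^ℤ such that for every L ∈ ℕ there exists i_L ∈ ℤ with y^L = S^{i_L} φ_{τ_L}(y^{L+1}). Then y^0 ∈ Y_τ. -/

import Mathlib

open MeasureTheory Filter Topology
open scoped ENNReal

attribute [local instance] Classical.propDecidable

noncomputable section

/-- The shift map on bi-infinite sequences: `(S x) n = x (n+1)`. -/
def shift {α : Type*} (x : ℤ → α) : ℤ → α := fun n => x (n + 1)

/-- Shift by an arbitrary integer amount `m`. -/
def shiftZ {α : Type*} (m : ℤ) (x : ℤ → α) : ℤ → α := fun n => x (n + m)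

/-- A run structure on a bi-infinite sequence `x`: `t k` is the starting index of the
`k`-th maximal mono-symbol block of `x`, indexed so that block `0` contains position `0`. -/
structure RunStructure (x : ℤ → ℕ) where
  t : ℤ → ℤ
  mono : StrictMono t
  start_nonpos : t 0 ≤ 0
  start_pos : 0 < t 1
  const : ∀ k i : ℤ, t k ≤ i → i < t (k + 1) → x i = x (t k)
  alt : ∀ k : ℤ, x (t (k + 1)) ≠ x (t k)

/-- `d` is the run-length derivative of `x`: `d k` is the length of the `k`-th run. -/
def IsDelta (x d : ℤ → ℕ) : Prop :=
  ∃ r : RunStructure x, ∀ k : ℤ, (d k : ℤ) = r.t (k + 1) - r.t k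

/-- The run-length derivative operator `Δ` (junk value when no derivative exists). -/
def delta (x : ℤ → ℕ) : ℤ → ℕ :=
  if h : ∃ d, IsDelta x d then h.choose else fun _ => 0

/-- A bi-infinite sequence is smooth over `{1,3}` if all its iterated derivatives exist
and take values in `{1,3}`. -/
def SmoothSeq (x : ℤ → ℕ) : Prop :=
  ∀ k : ℕ, ∀ n : ℤ, delta^[k] x n = 1 ∨ delta^[k] x n = 3

/-- The set `X` of bi-infinite smooth sequences over `{1,3}`. -/
def SmoothX : Set (ℤ → ℕ) := {x | SmoothSeq x}

/-- The recoding alphabet: `A = 1`, `B = 3`, `C = 111`, `D = 333`. -/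
inductive ABCD : Type
  | A | B | C | D
deriving DecidableEq

instance : TopologicalSpace ABCD := ⊥
instance : DiscreteTopology ABCD := ⟨rfl⟩
instance : MeasurableSpace ABCD := ⊤

open ABCD

/-- The symbol (1 or 3) of the run encoded by a letter. -/
def sval : ABCD → ℕ
  | A => 1
  | B => 3
  | C => 1
  | D => 3

/-- The length (1 or 3) of the run encoded by a letter; this is also the value of `Δx`
at the corresponding position. -/
def lval : ABCD → ℕ
  | A => 1
  | B => 1
  | C => 3
  | D => 3

/-- `y` is the recoding of `x`: the letter `y k` encodes the `k`-th run of `x`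
(its symbol and its length). -/
def IsRecoding (x : ℤ → ℕ) (y : ℤ → ABCD) : Prop :=
  ∃ r : RunStructure x, ∀ k : ℤ,
    x (r.t k) = sval (y k) ∧ r.t (k + 1) - r.t k = (lval (y k) : ℤ)

/-- The recoding map `rec` (junk value when no recoding exists). -/
def recode (x : ℤ → ℕ) : ℤ → ABCD :=
  if h : ∃ y, IsRecoding x y then h.choose else fun _ => A

/-- The set `Y = rec(X)` of recodings of smooth sequences. -/
def SmoothY : Set (ℤ → ABCD) := recode '' SmoothX

/-- The derivative operator induced on recodings: since `(Δx) i = lval (rec x i)`,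
we have `Δ(rec x) = rec (Δ x) = recode (lval ∘ rec x)`. -/
def deltaY (y : ℤ → ABCD) : ℤ → ABCD := recode fun i => (lval (y i) : ℕ)

/-- `y` is well-aligned: the elementary block of `y` containing coordinate `0` starts
at position `0` (elementary blocks of `y` are exactly the runs of `Δx`, and
`(Δx) i = lval (y i)`). -/
def WellAligned (y : ℤ → ABCD) : Prop := lval (y (-1)) ≠ lval (y 0)

/-- `B_Y^L`: the set of `y ∈ Y` such that `y, Δy, ..., Δ^{L-1} y` are all well-aligned. -/
def BY (L : ℕ) : Set (ℤ → ABCD) :=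
  {y | y ∈ SmoothY ∧ ∀ l < L, WellAligned (deltaY^[l] y)}

/-- `Σ_y^L(n) = #{k ∈ [1,n] : S^k y ∈ B_Y^L}`. -/
def SigY (L : ℕ) (y : ℤ → ABCD) (n : ℕ) : ℕ :=
  ((Finset.Icc 1 n).filter fun k => shift^[k] y ∈ BY L).card

/-- `y` contains an elementary block in `{ABA, DCD}` (for `y ∈ Y`, any such factor is
automatically an elementary block). -/
def HasType0 (y : ℤ → ABCD) : Prop :=
  ∃ i : ℤ, (y i = A ∧ y (i + 1) = B ∧ y (i + 2) = A) ∨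
           (y i = D ∧ y (i + 1) = C ∧ y (i + 2) = D)

/-- `y` contains an elementary block in `{BAB, CDC}`. -/
def HasType1 (y : ℤ → ABCD) : Prop :=
  ∃ i : ℤ, (y i = B ∧ y (i + 1) = A ∧ y (i + 2) = B) ∨
           (y i = C ∧ y (i + 1) = D ∧ y (i + 2) = C)

/-- The type of a recoded sequence: `false` = type 0, `true` = type 1. -/
def typeOf (y : ℤ → ABCD) : Bool := decide (HasType1 y)

/-- The sequence of types of the successive derivatives of a smooth sequence `x`. -/
def TypesX (x : ℤ → ℕ) : ℕ → Bool := fun n => typeOf (recode (delta^[n] x))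

/-- The sequence of types of the successive derivatives of a recoded sequence `y`. -/
def TypesY (y : ℤ → ABCD) : ℕ → Bool := fun n => typeOf (deltaY^[n] y)

/-- `X_τ`: smooth bi-infinite sequences whose type sequence is exactly `τ`. -/
def Xset (τ : ℕ → Bool) : Set (ℤ → ℕ) := {x ∈ SmoothX | TypesX x = τ}

/-- `Y_τ = rec(X_τ)`. -/
def Yset (τ : ℕ → Bool) : Set (ℤ → ABCD) := recode '' Xset τ

/-- A sequence over `{A,B,C,D}` is alternating: no two consecutive symbols in `{A,C}`
and no two consecutive symbols in `{B,D}`. -/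
def Alternating (y : ℤ → ABCD) : Prop := ∀ n : ℤ, sval (y n) ≠ sval (y (n + 1))

/-- The substitutions `φ₀` and `φ₁` on letters. -/
def phiW : Bool → ABCD → List ABCD
  | false, A => [A]
  | false, B => [D]
  | false, C => [A, B, A]
  | false, D => [D, C, D]
  | true, A => [B]
  | true, B => [C]
  | true, C => [B, A, B]
  | true, D => [C, D, C]

/-- `z` is the image of the bi-infinite sequence `y` under the substitution `φ_t`, with
the convention that the image of the letter at position `0` starts at position `0`. -/
def IsSubst (t : Bool) (y z : ℤ → ABCD) : Prop :=
  ∃ u : ℤ → ℤ, u 0 = 0 ∧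
    (∀ k : ℤ, u (k + 1) = u k + (phiW t (y k)).length) ∧
    (∀ k : ℤ, ∀ j : Fin (phiW t (y k)).length, z (u k + (j : ℕ)) = (phiW t (y k)).get j)

/-- The substitution `φ_t` on bi-infinite sequences. -/
def substF (t : Bool) (y : ℤ → ABCD) : ℤ → ABCD :=
  if h : ∃ z, IsSubst t y z then h.choose else y

/-- The composition `φ_{τ₀} ∘ φ_{τ₁} ∘ ⋯ ∘ φ_{τ_{L-1}}`. -/
def substComp (τ : ℕ → Bool) : ℕ → (ℤ → ABCD) → (ℤ → ABCD)
  | 0 => id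
  | L + 1 => substF (τ 0) ∘ substComp (fun n => τ (n + 1)) L

/-- The homographies `h₀` and `h₁`. -/
def hmap : Bool → ℝ × ℝ → ℝ × ℝ
  | false, p => ((1 - p.1) / (3 - 2 * (p.1 + p.2)), (1 / 2 - p.1) / (3 - 2 * (p.1 + p.2)))
  | true, p => ((1 / 2 - p.1) / (3 - 2 * (p.1 + p.2)), (1 - p.1) / (3 - 2 * (p.1 + p.2)))

/-- The square `K = [0,1/2] × [0,1/2]`. -/
def Ksq : Set (ℝ × ℝ) := Set.Icc (0 : ℝ) (1 / 2) ×ˢ Set.Icc (0 : ℝ) (1 / 2)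

/-- The domain `E = {(a,b) ∈ K : a + b ≤ 3/4}`. -/
def Eset : Set (ℝ × ℝ) := {p ∈ Ksq | p.1 + p.2 ≤ 3 / 4}

/-- The composition `h_{t₀} ∘ h_{t₁} ∘ ⋯ ∘ h_{t_L}`. -/
def hComp (t : ℕ → Bool) : ℕ → (ℝ × ℝ → ℝ × ℝ)
  | 0 => hmap (t 0)
  | L + 1 => hComp t L ∘ hmap (t (L + 1))

/-- The point `(a(t), b(t))`, unique point of `⋂_L (h_{t₀} ∘ ⋯ ∘ h_{t_L})(E)`. -/
def abPoint (t : ℕ → Bool) : ℝ × ℝ :=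
  if h : ∃ p : ℝ × ℝ, (⋂ L : ℕ, hComp t L '' Eset) = {p} then h.choose else 0

/-- The number of occurrences of the letter `s` among positions `1, ..., m` of `z`. -/
def letterCount (s : ABCD) (z : ℤ → ABCD) (m : ℕ) : ℕ :=
  ((Finset.Icc 1 m).filter fun k => z (k : ℤ) = s).card

/-- `w` occurs as a factor of `y` at position `i`. -/
def IsFactorAt (w : List ABCD) (y : ℤ → ABCD) (i : ℤ) : Prop :=
  ∀ j : Fin w.length, y (i + (j : ℕ)) = w.get j

/-- The cylinder set `[w]` in `{1,3}^ℤ`. -/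
def cylX (w : List ℕ) : Set (ℤ → ℕ) :=
  {x | ∀ j : Fin w.length, x ((j : ℕ) : ℤ) = w.get j}

/-- The cylinder set `[w]` in `{A,B,C,D}^ℤ`. -/
def cylY (w : List ABCD) : Set (ℤ → ABCD) :=
  {y | ∀ j : Fin w.length, y ((j : ℕ) : ℤ) = w.get j}

/-- The number of occurrences of the finite word `w` in the prefix `x₀ ⋯ x_{n-1}`. -/
def occCount (x : ℤ → ℕ) (w : List ℕ) (n : ℕ) : ℕ :=
  ((Finset.range n).filter fun i =>
    i + w.length ≤ n ∧ ∀ j : Fin w.length, x (((i + (j : ℕ) : ℕ)) : ℤ) = w.get j).card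

/-- A subshift `Z` is minimal if it contains no nonempty proper closed shift-invariant
subset. -/
def ShiftMinimal {α : Type*} [TopologicalSpace α] (Z : Set (ℤ → α)) : Prop :=
  ∀ W : Set (ℤ → α), W ⊆ Z → W.Nonempty → IsClosed W → shift '' W = W → W = Z

/-!
An alternating sequence `y` over `{A,B,C,D}` is the recoding of the sequence
`expand y ∈ {1,3}^ℤ` obtained by writing out each letter as its run. Every letter of
`φ_t(a)` encodes a run of length `sval a` and `φ_t(a)` has `lval a` letters, so the run lengths of
`φ_t(y)` spell out `expand y`: the derivative of (a shift of) `expand (φ_t y)` is a shift of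
`expand y`. Along the tower, `Δⁿ (expand y⁰)` is therefore a shift of `expand yⁿ`, which is
smooth, and its recoding is a shift of `yⁿ`. Finally `φ₀`-images never contain `BAB` or
`CDC`, while the `φ₁`-image of a sequence containing `C` or `D` (as does every `φ_t`-image of
an alternating sequence) contains `BAB` or `CDC`.
-/

namespace RunLength

section IntStrictMono

variable {f : ℤ → ℤ}

lemma _root_.StrictMono.int_apply_add_sub_le (hf : StrictMono f) {a b : ℤ} (hab : a ≤ b) :
    f a + (b - a) ≤ f b := by
  induction b, hab using Int.leInduction with
  | base => simp
  | succ b _ ih => have := hf (lt_add_one b); omega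

lemma _root_.StrictMono.int_exists_apply_le_lt_apply_succ (hf : StrictMono f) (n : ℤ) :
    ∃ k, f k ≤ n ∧ n < f (k + 1) := by
  have hbdd : ∃ b, ∀ k, f k ≤ n → k ≤ b := by
    refine ⟨max 0 (n - f 0), fun k hk => ?_⟩
    rcases le_total k 0 with h | h
    · exact h.trans (le_max_left _ _)
    · have := hf.int_apply_add_sub_le h; omega
  have hinh : ∃ k, f k ≤ n := by
    refine ⟨min 0 (n - f 0), ?_⟩
    have := hf.int_apply_add_sub_le (min_le_left 0 (n - f 0)); omega
  obtain ⟨k, hk, hmax⟩ := Int.exists_greatest_of_bdd hbdd hinh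
  exact ⟨k, hk, not_le.mp fun h => by have := hmax (k + 1) h; omega⟩

lemma _root_.StrictMono.int_eq_of_apply_le_lt_apply_succ (hf : StrictMono f) {k k' n : ℤ}
    (h₁ : f k ≤ n) (h₂ : n < f (k + 1)) (h₁' : f k' ≤ n) (h₂' : n < f (k' + 1)) : k = k' := by
  by_contra h
  rcases lt_or_gt_of_ne h with h | h
  · have := hf.monotone (show k + 1 ≤ k' by omega); omega
  · have := hf.monotone (show k' + 1 ≤ k by omega); omega

/-- The index `k` of the block `[f k, f (k+1))` containing `n` (`0` if `f` is not strictly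
monotone). -/
def blockIndex (f : ℤ → ℤ) (n : ℤ) : ℤ :=
  if h : ∃ k, f k ≤ n ∧ n < f (k + 1) then h.choose else 0

lemma blockIndex_spec (hf : StrictMono f) (n : ℤ) :
    f (blockIndex f n) ≤ n ∧ n < f (blockIndex f n + 1) := by
  have h := hf.int_exists_apply_le_lt_apply_succ n
  rw [blockIndex, dif_pos h]
  exact h.choose_spec

lemma blockIndex_eq (hf : StrictMono f) {k n : ℤ} (h₁ : f k ≤ n) (h₂ : n < f (k + 1)) :
    blockIndex f n = k :=
  hf.int_eq_of_apply_le_lt_apply_succ (blockIndex_spec hf n).1 (blockIndex_spec hf n).2 h₁ h₂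

lemma blockIndex_apply (hf : StrictMono f) (k : ℤ) : blockIndex f (f k) = k :=
  blockIndex_eq hf le_rfl (hf (lt_add_one k))

end IntStrictMono

/-- The partial sums `∑_{0 ≤ j < k} ℓ j` for `k ≥ 0`, and `-∑_{k ≤ j < 0} ℓ j` for `k < 0`. -/
def partialSum (ℓ : ℤ → ℕ) (k : ℤ) : ℤ :=
  (∑ j ∈ Finset.range k.toNat, (ℓ j : ℤ)) - ∑ j ∈ Finset.range (-k).toNat, (ℓ (-(j + 1)) : ℤ)

lemma partialSum_zero (ℓ : ℤ → ℕ) : partialSum ℓ 0 = 0 := by simp [partialSum]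

lemma partialSum_succ (ℓ : ℤ → ℕ) (k : ℤ) : partialSum ℓ (k + 1) = partialSum ℓ k + ℓ k := by
  rcases le_or_gt 0 k with hk | hk
  · obtain ⟨n, rfl⟩ := Int.eq_ofNat_of_zero_le hk
    have h₁ : ((n : ℤ) + 1).toNat = n + 1 := by omega
    have h₂ : (-((n : ℤ) + 1)).toNat = 0 := by omega
    simp only [partialSum, h₁, h₂, Finset.sum_range_succ, Finset.range_zero, Finset.sum_empty]
    simp
  · obtain ⟨n, rfl⟩ : ∃ n : ℕ, k = -(n + 1) := ⟨(-k - 1).toNat, by omega⟩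
    have h₁ : (-((n : ℤ) + 1) + 1).toNat = 0 := by omega
    have h₂ : (-(-((n : ℤ) + 1) + 1)).toNat = n := by omega
    have h₃ : (-(-((n : ℤ) + 1))).toNat = n + 1 := by omega
    have h₄ : (-((n : ℤ) + 1)).toNat = 0 := by omega
    simp only [partialSum, h₁, h₂, h₃, h₄, Finset.sum_range_succ, Finset.range_zero,
      Finset.sum_empty]
    ring_nf

lemma partialSum_strictMono {ℓ : ℤ → ℕ} (hℓ : ∀ k, 0 < ℓ k) : StrictMono (partialSum ℓ) :=
  strictMono_int_of_lt_succ fun k => by have := hℓ k; rw [partialSum_succ]; omega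

lemma eq_partialSum {ℓ : ℤ → ℕ} {u : ℤ → ℤ} (h₀ : u 0 = 0)
    (hsucc : ∀ k, u (k + 1) = u k + ℓ k) : u = partialSum ℓ := by
  funext k
  induction k using Int.induction_on with
  | zero => rw [h₀, partialSum_zero]
  | succ n ih => rw [hsucc, partialSum_succ, ih]
  | pred n ih =>
      have h := hsucc (-(n : ℤ) - 1)
      have h' := partialSum_succ ℓ (-(n : ℤ) - 1)
      rw [sub_add_cancel] at h h'
      omega

section RunStructure

variable {x : ℤ → ℕ}

lemma _root_.RunStructure.apply_sub_one_ne (r : RunStructure x) (k : ℤ) :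
    x (r.t k - 1) ≠ x (r.t k) := by
  have h := r.const (k - 1) (r.t k - 1) (by have := r.mono (sub_one_lt k); omega)
    (by rw [sub_add_cancel]; omega)
  rw [h]
  simpa using (r.alt (k - 1)).symm

lemma _root_.RunStructure.succ_le_of_lt (r r' : RunStructure x) {k j : ℤ} (h : r.t k < r'.t j) :
    r.t (k + 1) ≤ r'.t j := by
  by_contra h'
  apply r'.apply_sub_one_ne j
  rw [r.const k _ (by omega) (by omega), r.const k _ h.le (by omega)]

lemma _root_.RunStructure.t_eq (r r' : RunStructure x) : r.t = r'.t := by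
  have base : ∀ r r' : RunStructure x, r.t 0 ≤ r'.t 0 := fun r r' => by
    by_contra h
    have := r'.succ_le_of_lt r (not_le.mp h)
    rw [zero_add] at this
    have := r.start_nonpos
    have := r'.start_pos
    omega
  have succ : ∀ r r' : RunStructure x, ∀ k, r.t k = r'.t k → r.t (k + 1) ≤ r'.t (k + 1) :=
    fun r r' k hk => r.succ_le_of_lt r' (hk ▸ r'.mono (lt_add_one k))
  have pred : ∀ r r' : RunStructure x, ∀ k, r.t k = r'.t k → r.t (k - 1) ≤ r'.t (k - 1) :=
    fun r r' k hk => by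
      by_contra h
      have := r'.succ_le_of_lt r (not_le.mp h)
      rw [sub_add_cancel] at this
      have := r.mono (sub_one_lt k)
      omega
  funext k
  induction k using Int.induction_on with
  | zero => exact le_antisymm (base r r') (base r' r)
  | succ n ih => exact le_antisymm (succ r r' _ ih) (succ r' r _ ih.symm)
  | pred n ih => exact le_antisymm (pred r r' _ ih) (pred r' r _ ih.symm)

lemma delta_eq_of_isDelta {d : ℤ → ℕ} (h : IsDelta x d) : delta x = d := by
  have h' : ∃ d, IsDelta x d := ⟨d, h⟩
  rw [delta, dif_pos h']
  obtain ⟨r, hr⟩ := h'.choose_spec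
  obtain ⟨r', hr'⟩ := h
  funext k
  have : (h'.choose k : ℤ) = d k := by rw [hr k, hr' k, r.t_eq r']
  exact_mod_cast this

lemma _root_.ABCD.eq_of_sval_eq_of_lval_eq {a b : ABCD} (hs : sval a = sval b)
    (hl : lval a = lval b) : a = b := by
  cases a <;> cases b <;> simp_all [sval, lval]

lemma recode_eq_of_isRecoding {y : ℤ → ABCD} (h : IsRecoding x y) : recode x = y := by
  have h' : ∃ y, IsRecoding x y := ⟨y, h⟩
  rw [recode, dif_pos h']
  obtain ⟨r, hr⟩ := h'.choose_spec
  obtain ⟨r', hr'⟩ := h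
  funext k
  rw [r.t_eq r'] at hr
  refine ABCD.eq_of_sval_eq_of_lval_eq ((hr k).1.symm.trans (hr' k).1) ?_
  exact_mod_cast (hr k).2.symm.trans (hr' k).2

lemma _root_.IsRecoding.isDelta {y : ℤ → ABCD} (h : IsRecoding x y) :
    IsDelta x fun k => lval (y k) :=
  let ⟨r, hr⟩ := h
  ⟨r, fun k => (hr k).2.symm⟩

def _root_.RunStructure.ofShiftZ {u : ℤ → ℤ} (hu : StrictMono u)
    (hconst : ∀ k i, u k ≤ i → i < u (k + 1) → x i = x (u k))
    (halt : ∀ k, x (u (k + 1)) ≠ x (u k)) (m : ℤ) : RunStructure (shiftZ m x) where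
  t k := u (k + blockIndex u m) - m
  mono a b hab := by
    dsimp only
    have := hu (show a + blockIndex u m < b + blockIndex u m by omega)
    omega
  start_nonpos := by have := (blockIndex_spec hu m).1; simpa using this
  start_pos := by have := (blockIndex_spec hu m).2; rw [add_comm]; omega
  const k i h₁ h₂ := by
    simp only [shiftZ, sub_add_cancel]
    exact hconst _ _ (by omega) (by rw [add_right_comm] at h₂; omega)
  alt k := by
    simp only [shiftZ, sub_add_cancel, add_right_comm k 1]
    exact halt _

end RunStructure

lemma shiftZ_zero {α : Type*} (x : ℤ → α) : shiftZ 0 x = x := by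
  funext n; simp [shiftZ]

lemma shiftZ_shiftZ {α : Type*} (a b : ℤ) (x : ℤ → α) :
    shiftZ a (shiftZ b x) = shiftZ (a + b) x := by
  funext n; simp [shiftZ, add_assoc]

section Expansion

variable {y : ℤ → ABCD}

lemma lval_pos (a : ABCD) : 0 < lval a := by cases a <;> simp [lval]

/-- `runStart y k` is the position where the run encoded by the letter `y k` starts in
`expand y`. -/
def runStart (y : ℤ → ABCD) : ℤ → ℤ := partialSum fun k => lval (y k)

lemma runStart_zero (y : ℤ → ABCD) : runStart y 0 = 0 := partialSum_zero _

lemma runStart_succ (y : ℤ → ABCD) (k : ℤ) : runStart y (k + 1) = runStart y k + lval (y k) :=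
  partialSum_succ _ k

lemma runStart_strictMono (y : ℤ → ABCD) : StrictMono (runStart y) :=
  partialSum_strictMono fun k => lval_pos (y k)

lemma exists_eq_runStart_add (y : ℤ → ABCD) (n : ℤ) :
    ∃ k, ∃ j : ℕ, j < lval (y k) ∧ n = runStart y k + j := by
  obtain ⟨h₁, h₂⟩ := blockIndex_spec (runStart_strictMono y) n
  rw [runStart_succ] at h₂
  exact ⟨blockIndex (runStart y) n, (n - runStart y (blockIndex (runStart y) n)).toNat,
    by omega, by omega⟩

/-- The sequence in `{1,3}^ℤ` whose recoding is `y`, the run of `y 0` starting at `0`. -/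
def expand (y : ℤ → ABCD) (n : ℤ) : ℕ := sval (y (blockIndex (runStart y) n))

lemma expand_runStart_add {k : ℤ} {j : ℕ} (hj : j < lval (y k)) :
    expand y (runStart y k + j) = sval (y k) := by
  rw [expand,
    blockIndex_eq (k := k) (runStart_strictMono y) (by omega) (by rw [runStart_succ]; omega)]

lemma expand_eq_one_or_three (y : ℤ → ABCD) (n : ℤ) : expand y n = 1 ∨ expand y n = 3 := by
  unfold expand; cases y (blockIndex (runStart y) n) <;> simp [sval]

lemma isRecoding_shiftZ_expand (hy : Alternating y) (m : ℤ) :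
    IsRecoding (shiftZ m (expand y)) (shiftZ (blockIndex (runStart y) m) y) := by
  have hexp : ∀ k, expand y (runStart y k) = sval (y k) := fun k => by
    simpa using expand_runStart_add (j := 0) (lval_pos (y k))
  have hconst : ∀ k i, runStart y k ≤ i → i < runStart y (k + 1) →
      expand y i = expand y (runStart y k) := fun k i h₁ h₂ => by
    rw [runStart_succ] at h₂
    rw [hexp, ← expand_runStart_add (j := (i - runStart y k).toNat) (by omega)]
    congr 1; omega
  refine ⟨.ofShiftZ (runStart_strictMono y) hconst (fun k => ?_) m, fun k => ⟨?_, ?_⟩⟩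
  · rw [hexp, hexp]; exact (hy k).symm
  · simp [RunStructure.ofShiftZ, shiftZ, hexp]
  · simp only [RunStructure.ofShiftZ, shiftZ, add_right_comm k 1, runStart_succ]
    ring

lemma recode_shiftZ_expand (hy : Alternating y) (m : ℤ) :
    recode (shiftZ m (expand y)) = shiftZ (blockIndex (runStart y) m) y :=
  recode_eq_of_isRecoding (isRecoding_shiftZ_expand hy m)

lemma delta_shiftZ_expand (hy : Alternating y) (m : ℤ) :
    delta (shiftZ m (expand y)) = shiftZ (blockIndex (runStart y) m) fun k => lval (y k) :=
  delta_eq_of_isDelta (isRecoding_shiftZ_expand hy m).isDelta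

lemma recode_expand (hy : Alternating y) : recode (expand y) = y := by
  have h := recode_shiftZ_expand hy 0
  rwa [shiftZ_zero, ← runStart_zero y, blockIndex_apply (runStart_strictMono y),
    shiftZ_zero] at h

end Expansion

section Substitution

variable {y : ℤ → ABCD}

lemma length_phiW (t : Bool) (a : ABCD) : (phiW t a).length = lval a := by
  cases t <;> cases a <;> rfl

lemma exists_isSubst (t : Bool) (y : ℤ → ABCD) : ∃ z, IsSubst t y z := by
  refine ⟨fun n => (phiW t (y (blockIndex (runStart y) n))).getD
    (n - runStart y (blockIndex (runStart y) n)).toNat A, runStart y, runStart_zero y,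
    fun k => by rw [runStart_succ, length_phiW], fun k j => ?_⟩
  have hj : (j : ℕ) < lval (y k) := length_phiW t (y k) ▸ j.isLt
  dsimp only
  rw [blockIndex_eq (k := k) (runStart_strictMono y) (by omega) (by rw [runStart_succ]; omega)]
  simp

lemma substF_runStart_add (t : Bool) (y : ℤ → ABCD) {k : ℤ} {j : ℕ} (hj : j < lval (y k)) :
    substF t y (runStart y k + j) = (phiW t (y k)).getD j A := by
  have h := exists_isSubst t y
  obtain ⟨u, hu₀, hsucc, hz⟩ := h.choose_spec
  obtain rfl : u = runStart y := eq_partialSum hu₀ fun k => by rw [hsucc, length_phiW]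
  rw [substF, dif_pos h, List.getD_eq_getElem _ _ (by rwa [length_phiW])]
  exact hz k ⟨j, by rwa [length_phiW]⟩

lemma substF_runStart (t : Bool) (y : ℤ → ABCD) (k : ℤ) :
    substF t y (runStart y k) = (phiW t (y k)).getD 0 A := by
  simpa using substF_runStart_add t y (j := 0) (lval_pos (y k))

lemma lval_getD_phiW (t : Bool) (a : ABCD) {j : ℕ} (hj : j < lval a) :
    lval ((phiW t a).getD j A) = sval a := by
  cases t <;> cases a <;> simp only [lval] at hj <;> interval_cases j <;> rfl

lemma lval_substF (t : Bool) (y : ℤ → ABCD) : (fun n => lval (substF t y n)) = expand y := by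
  funext n
  obtain ⟨k, j, hj, rfl⟩ := exists_eq_runStart_add y n
  rw [substF_runStart_add t y hj, lval_getD_phiW t _ hj, expand_runStart_add hj]

lemma phiW_false_getD_eq_B_or_C {a : ABCD} {j : ℕ} (hj : j < lval a)
    (h : (phiW false a).getD j A = B ∨ (phiW false a).getD j A = C) : lval a = 3 ∧ j = 1 := by
  cases a <;> simp only [lval] at hj <;> interval_cases j <;> simp_all [phiW, lval]

/-- The letters `B`, `C` of a `φ₀`-image only occur in the middle of an `ABA` or `DCD`, and
the letter two places further on starts the next image, with `A` or `D`. -/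
lemma not_hasType1_substF_false (y : ℤ → ABCD) : ¬ HasType1 (substF false y) := by
  rintro ⟨p, h⟩
  obtain ⟨k, j, hj, rfl⟩ := exists_eq_runStart_add y p
  have hfirst : (phiW false (y k)).getD j A = B ∨ (phiW false (y k)).getD j A = C := by
    rw [← substF_runStart_add false y hj]
    rcases h with h | h
    exacts [.inl h.1, .inr h.1]
  obtain ⟨hl, rfl⟩ := phiW_false_getD_eq_B_or_C hj hfirst
  have hnext : runStart y k + ((1 : ℕ) : ℤ) + 2 = runStart y (k + 1) := by
    rw [runStart_succ, hl]; push_cast; ring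
  have hhead : substF false y (runStart y (k + 1)) = A ∨
      substF false y (runStart y (k + 1)) = D := by
    rw [substF_runStart]; cases y (k + 1) <;> simp [phiW]
  rw [hnext] at h
  rcases hhead with h' | h' <;> simp [h'] at h

lemma hasType1_substF_true {n : ℤ} (h : y n = C ∨ y n = D) : HasType1 (substF true y) := by
  have hl : lval (y n) = 3 := by rcases h with h | h <;> simp [h, lval]
  have h₀ := substF_runStart_add true y (k := n) (j := 0) (by omega)
  have h₁ := substF_runStart_add true y (k := n) (j := 1) (by omega)
  have h₂ := substF_runStart_add true y (k := n) (j := 2) (by omega)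
  push_cast at h₀ h₁ h₂
  refine ⟨runStart y n, ?_⟩
  rcases h with h | h <;> simp_all [phiW]

lemma _root_.Alternating.exists_eq_B_or_D (hy : Alternating y) : ∃ k, y k = B ∨ y k = D := by
  by_contra! h
  have hs : ∀ k, sval (y k) = 1 := fun k => by
    cases hk : y k <;> simp_all [sval]
  exact hy 0 (by rw [hs, hs])

lemma exists_substF_eq_C_or_D (t : Bool) (hy : Alternating y) :
    ∃ n, substF t y n = C ∨ substF t y n = D := by
  obtain ⟨k, hk⟩ := hy.exists_eq_B_or_D
  refine ⟨runStart y k, ?_⟩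
  rw [substF_runStart]
  cases t <;> rcases hk with h | h <;> simp [h, phiW]

end Substitution

lemma hasType1_shiftZ (m : ℤ) (y : ℤ → ABCD) : HasType1 (shiftZ m y) ↔ HasType1 y := by
  constructor
  · rintro ⟨i, h⟩
    exact ⟨i + m, by simpa [shiftZ, add_right_comm] using h⟩
  · rintro ⟨i, h⟩
    exact ⟨i - m, by simpa [shiftZ, sub_add_eq_add_sub] using h⟩

lemma typeOf_shiftZ (m : ℤ) (y : ℤ → ABCD) : typeOf (shiftZ m y) = typeOf y :=
  decide_eq_decide.mpr (hasType1_shiftZ m y)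

section Tower

variable {τ : ℕ → Bool} {ys : ℕ → ℤ → ABCD}

lemma typeOf_eq_of_tower (halt : ∀ L, Alternating (ys L))
    (hsub : ∀ L, ∃ i, ys L = shiftZ i (substF (τ L) (ys (L + 1)))) (L : ℕ) :
    typeOf (ys L) = τ L := by
  obtain ⟨i, hi⟩ := hsub L
  rw [hi, typeOf_shiftZ]
  cases τ L
  · exact decide_eq_false (not_hasType1_substF_false _)
  · obtain ⟨j, hj⟩ := hsub (L + 1)
    obtain ⟨n, hn⟩ := exists_substF_eq_C_or_D (τ (L + 1)) (halt (L + 2))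
    exact decide_eq_true (hasType1_substF_true (n := n - j) (by simpa [hj, shiftZ] using hn))

lemma iterate_delta_expand_of_tower (halt : ∀ L, Alternating (ys L))
    (hsub : ∀ L, ∃ i, ys L = shiftZ i (substF (τ L) (ys (L + 1)))) (n : ℕ) :
    ∃ m, delta^[n] (expand (ys 0)) = shiftZ m (expand (ys n)) := by
  induction n with
  | zero => exact ⟨0, (shiftZ_zero _).symm⟩
  | succ n ih =>
    obtain ⟨m, hm⟩ := ih
    obtain ⟨i, hi⟩ := hsub n
    refine ⟨blockIndex (runStart (ys n)) m + i, ?_⟩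
    rw [Function.iterate_succ_apply', hm, delta_shiftZ_expand (halt n), ← shiftZ_shiftZ,
      ← lval_substF (τ n)]
    congr 1
    rw [hi]
    rfl

end Tower

end RunLength

open RunLength in
/-- Elements of `Y_τ` from towers of substitutions.
If `(y^L)` is a family of alternating sequences with `y^L = S^{i_L} φ_{τ_L}(y^{L+1})`
for all `L`, then `y^0 ∈ Y_τ`. -/
theorem stmt6 (τ : ℕ → Bool) (ys : ℕ → ℤ → ABCD)
    (halt : ∀ L : ℕ, Alternating (ys L))
    (hsub : ∀ L : ℕ, ∃ i : ℤ, ys L = shiftZ i (substF (τ L) (ys (L + 1)))) :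
    ys 0 ∈ Yset τ := by
  have hiter := iterate_delta_expand_of_tower halt hsub
  refine ⟨expand (ys 0), ⟨fun k n => ?_, funext fun n => ?_⟩, recode_expand (halt 0)⟩
  · obtain ⟨m, hm⟩ := hiter k
    rw [hm]
    exact expand_eq_one_or_three _ _
  · obtain ⟨m, hm⟩ := hiter n
    rw [TypesX, hm, recode_shiftZ_expand (halt n), typeOf_shiftZ, typeOf_eq_of_tower halt hsub]
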